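/- arXiv:0909.3628 — 5 statements merged into one kernel-verified Lean document; each statement's English description precedes it below -/
import Mathlib

section
/- Let E be a real normed vector space, let Ω ⊆ E be open and path-connected, let F : Ω → E, and let C ≥ 0. Then the following are equivalent: (i) for all x, y ∈ Ω and every continuous path γ : [0,1] → Ω with γ(0) = x, γ(1) = y and finite length, one has ‖F(y) − F(x)‖ ≤ C · (length of γ); (ii) F is locally Lipschitz with common constant C, i.e., every point of Ω has an open ball neighborhood contained in Ω on which F is Lipschitz with constant C. (In other words, the scheme operator F satisfies the intrinsic-metric stability bound ‖F(x*) − F(x)‖ ≤ C·Λ_Ω(x, x*) if and only if F is locally Lipschitz for the common constant C.) -/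
/-!
On a ball inside `Ω` the straight segment between two points is a path of length their
distance, so the path bound gives the Lipschitz bound there. Conversely, by a Lebesgue number
argument any path `γ` in `Ω` has a uniform partition so fine that consecutive points `γ sᵢ`,
`γ sᵢ₊₁` lie in a common ball on which `F` is `C`-Lipschitz. The triangle inequality then bounds
`‖F y - F x‖` by `C ∑ ‖γ sᵢ₊₁ - γ sᵢ‖`, and this polygonal length is at most the length of `γ`.
-/

open Set Filter Topology
open scoped NNReal ENNReal

theorem LipschitzWith.eVariationOn_Icc_le {E : Type*} [PseudoEMetricSpace E] {f : ℝ → E}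
    {K : ℝ≥0} (hf : LipschitzWith K f) (a b : ℝ) :
    eVariationOn f (Icc a b) ≤ K * ENNReal.ofReal (b - a) := by
  calc eVariationOn f (Icc a b) = eVariationOn (f ∘ id) (Icc a b) := rfl
    _ ≤ K * eVariationOn id (Icc a b) :=
        (hf.lipschitzOnWith (s := univ)).comp_eVariationOn_le (mapsTo_univ _ _)
    _ = K * ENNReal.ofReal (b - a) := by rw [eVariationOn_id_Icc]

theorem lipschitzOnWith_of_forall_norm_sub_le_mul_eVariationOn {E E' : Type*}
    [NormedAddCommGroup E] [NormedSpace ℝ E] [SeminormedAddCommGroup E'] {s : Set E}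
    (hs : Convex ℝ s) {F : E → E'} {C : ℝ} (hC : 0 ≤ C)
    (H : ∀ x ∈ s, ∀ y ∈ s, ∀ γ : ℝ → E, ContinuousOn γ (Icc 0 1) →
      (∀ t ∈ Icc (0 : ℝ) 1, γ t ∈ s) → γ 0 = x → γ 1 = y →
      eVariationOn γ (Icc 0 1) < ⊤ → ‖F y - F x‖ ≤ C * (eVariationOn γ (Icc 0 1)).toReal) :
    LipschitzOnWith C.toNNReal F s := by
  refine LipschitzOnWith.of_dist_le_mul fun z hz y hy => ?_
  have hγ := lipschitzWith_lineMap (𝕜 := ℝ) y z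
  have hvar : eVariationOn (AffineMap.lineMap y z) (Icc (0 : ℝ) 1) ≤ edist y z := by
    have := hγ.eVariationOn_Icc_le 0 1
    rwa [sub_zero, ENNReal.ofReal_one, mul_one, ← edist_nndist] at this
  have hvar_real : (eVariationOn (AffineMap.lineMap y z) (Icc (0 : ℝ) 1)).toReal ≤ dist z y := by
    rw [dist_comm, dist_edist]
    exact ENNReal.toReal_mono (edist_ne_top y z) hvar
  calc dist (F z) (F y) = ‖F z - F y‖ := dist_eq_norm _ _
    _ ≤ C * (eVariationOn (AffineMap.lineMap y z) (Icc (0 : ℝ) 1)).toReal :=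
        H y hy z hz _ hγ.continuous.continuousOn (fun t ht => hs.lineMap_mem hy hz ht)
          (AffineMap.lineMap_apply_zero y z) (AffineMap.lineMap_apply_one y z)
          (hvar.trans_lt (edist_lt_top y z))
    _ ≤ C.toNNReal * dist z y := by
        rw [Real.coe_toNNReal C hC]
        gcongr

theorem exists_pos_forall_dist_lt_edist_comp_le {α E E' : Type*} [PseudoMetricSpace α]
    [PseudoEMetricSpace E] [PseudoEMetricSpace E'] {K : Set α} (hK : IsCompact K)
    {γ : α → E} {Ω : Set E} {F : E → E'} {C : ℝ≥0} (hγ : ContinuousOn γ K)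
    (hγΩ : MapsTo γ K Ω) (hF : ∀ x ∈ Ω, ∃ U ∈ 𝓝 x, LipschitzOnWith C F U) :
    ∃ η > 0, ∀ s ∈ K, ∀ t ∈ K, dist s t < η →
      edist (F (γ s)) (F (γ t)) ≤ C * edist (γ s) (γ t) := by
  choose U hU hlip using hF
  obtain ⟨η, hη, hsub⟩ := Metric.uniformity_basis_dist.lebesgue_number_lemma_nhdsWithin' hK
    (U := fun t ht => γ ⁻¹' U (γ t) (hγΩ ht)) fun t ht => hγ t ht (hU _ _)
  refine ⟨η, hη, fun s hs t ht hst => ?_⟩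
  obtain ⟨_, hsubc⟩ := hsub s hs
  exact hlip _ _ (hsubc ⟨show dist s s < η by simpa using hη, hs⟩) (hsubc ⟨hst, ht⟩)

theorem edist_le_mul_eVariationOn_of_forall_dist_lt {E E' : Type*} [PseudoEMetricSpace E]
    [PseudoEMetricSpace E'] {f : ℝ → E} {g : ℝ → E'} {C : ℝ≥0} {a b η : ℝ} (hab : a ≤ b)
    (hη : 0 < η)
    (h : ∀ s ∈ Icc a b, ∀ t ∈ Icc a b, dist s t < η → edist (g s) (g t) ≤ C * edist (f s) (f t)) :
    edist (g a) (g b) ≤ C * eVariationOn f (Icc a b) := by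
  obtain ⟨n, hn⟩ := exists_nat_gt ((b - a) / η)
  have hn0 : (0 : ℝ) < n := lt_of_le_of_lt (by positivity) hn
  set u : ℕ → ℝ := fun i => a + i * ((b - a) / n) with hu_def
  have hstep_nonneg : 0 ≤ (b - a) / n := by have := sub_nonneg.2 hab; positivity
  have hu_mono : Monotone u := fun i j hij => by
    simp only [hu_def]; gcongr
  have hu_last : u n = b := by simp only [hu_def]; field_simp; ring
  have hu_mem : ∀ i ∈ Icc 0 n, u i ∈ Icc a b := fun i hi =>
    ⟨by simpa [hu_def] using hu_mono (Nat.zero_le i), hu_last ▸ hu_mono hi.2⟩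
  have hu_close : ∀ i, dist (u i) (u (i + 1)) < η := fun i => by
    rw [Real.dist_eq, abs_sub_comm, abs_of_nonneg (sub_nonneg.2 (hu_mono i.le_succ))]
    simp only [hu_def]; push_cast
    rw [show a + (i + 1) * ((b - a) / n) - (a + i * ((b - a) / n)) = (b - a) / n by ring,
      div_lt_iff₀ hn0]
    rwa [div_lt_iff₀ hη, mul_comm] at hn
  calc edist (g a) (g b) = edist (g (u 0)) (g (u n)) := by rw [hu_last]; simp [hu_def]
    _ ≤ ∑ i ∈ Finset.range n, edist (g (u i)) (g (u (i + 1))) :=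
        edist_le_range_sum_edist (g ∘ u) n
    _ ≤ ∑ i ∈ Finset.range n, C * edist (f (u (i + 1))) (f (u i)) := by
        refine Finset.sum_le_sum fun i hi => ?_
        rw [edist_comm (f _)]
        have hi := Finset.mem_range.1 hi
        exact h _ (hu_mem i ⟨i.zero_le, hi.le⟩) _ (hu_mem (i + 1) ⟨(i + 1).zero_le, hi⟩)
          (hu_close i)
    _ = C * ∑ i ∈ Finset.Ico 0 n, edist (f (u (i + 1))) (f (u i)) := by
        rw [Finset.mul_sum, Finset.range_eq_Ico]
    _ ≤ C * eVariationOn f (Icc a b) := by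
        gcongr
        exact eVariationOn.sum_le_of_monotoneOn_Icc (hu_mono.monotoneOn _) hu_mem

theorem edist_comp_le_mul_eVariationOn_of_lipschitzOnWith_nhds {E E' : Type*}
    [PseudoMetricSpace E] [PseudoEMetricSpace E'] {γ : ℝ → E} {Ω : Set E} {F : E → E'}
    {C : ℝ≥0} {a b : ℝ} (hab : a ≤ b) (hγ : ContinuousOn γ (Icc a b))
    (hγΩ : MapsTo γ (Icc a b) Ω) (hF : ∀ x ∈ Ω, ∃ U ∈ 𝓝 x, LipschitzOnWith C F U) :
    edist (F (γ a)) (F (γ b)) ≤ C * eVariationOn γ (Icc a b) := by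
  obtain ⟨η, hη, hclose⟩ := exists_pos_forall_dist_lt_edist_comp_le isCompact_Icc hγ hγΩ hF
  exact edist_le_mul_eVariationOn_of_forall_dist_lt hab hη hclose

theorem stmt_0_general
    {E : Type*} [NormedAddCommGroup E] [NormedSpace ℝ E]
    (Ω : Set E) (hΩopen : IsOpen Ω)
    (F : E → E) (C : ℝ) (hC : 0 ≤ C) :
    (∀ x ∈ Ω, ∀ y ∈ Ω, ∀ γ : ℝ → E,
        ContinuousOn γ (Set.Icc 0 1) →
        (∀ t ∈ Set.Icc (0 : ℝ) 1, γ t ∈ Ω) →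
        γ 0 = x → γ 1 = y →
        eVariationOn γ (Set.Icc 0 1) < ⊤ →
        ‖F y - F x‖ ≤ C * (eVariationOn γ (Set.Icc 0 1)).toReal)
    ↔
    (∀ x ∈ Ω, ∃ r > (0 : ℝ), Metric.ball x r ⊆ Ω ∧
        LipschitzOnWith C.toNNReal F (Metric.ball x r)) := by
  constructor
  · intro H x hx
    obtain ⟨r, hr, hball⟩ := Metric.isOpen_iff.1 hΩopen x hx
    refine ⟨r, hr, hball, lipschitzOnWith_of_forall_norm_sub_le_mul_eVariationOn
      (convex_ball x r) hC fun y hy z hz γ hγ hγball => ?_⟩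
    exact H y (hball hy) z (hball hz) γ hγ fun t ht => hball (hγball t ht)
  · rintro H x - y - γ hγ hγΩ rfl rfl hvar
    have hF : ∀ x ∈ Ω, ∃ U ∈ 𝓝 x, LipschitzOnWith C.toNNReal F U := fun x hx =>
      let ⟨r, hr, _, hlip⟩ := H x hx
      ⟨_, Metric.ball_mem_nhds x hr, hlip⟩
    have hedist := edist_comp_le_mul_eVariationOn_of_lipschitzOnWith_nhds zero_le_one hγ hγΩ hF
    rw [← dist_eq_norm, dist_comm, dist_edist]
    calc (edist (F (γ 0)) (F (γ 1))).toReal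
        ≤ (C.toNNReal * eVariationOn γ (Icc 0 1)).toReal :=
          ENNReal.toReal_mono (ENNReal.mul_ne_top ENNReal.coe_ne_top hvar.ne) hedist
      _ = C * (eVariationOn γ (Icc 0 1)).toReal := by
          rw [ENNReal.toReal_mul, ENNReal.coe_toReal, Real.coe_toNNReal C hC]

/-- The scheme operator `F` satisfies the intrinsic-metric stability bound
`‖F x* − F x‖ ≤ C · Λ_Ω(x, x*)` (equivalently, the bound against the length of every
finite-length continuous path in `Ω` joining `x` and `x*`) if and only if `F` is locally
Lipschitz on the open path-connected set `Ω` for the common constant `C`. -/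
theorem stmt_0
    {E : Type*} [NormedAddCommGroup E] [NormedSpace ℝ E]
    (Ω : Set E) (hΩopen : IsOpen Ω) (hΩconn : IsPathConnected Ω)
    (F : E → E) (C : ℝ) (hC : 0 ≤ C) :
    (∀ x ∈ Ω, ∀ y ∈ Ω, ∀ γ : ℝ → E,
        ContinuousOn γ (Set.Icc 0 1) →
        (∀ t ∈ Set.Icc (0 : ℝ) 1, γ t ∈ Ω) →
        γ 0 = x → γ 1 = y →
        eVariationOn γ (Set.Icc 0 1) < ⊤ →
        ‖F y - F x‖ ≤ C * (eVariationOn γ (Set.Icc 0 1)).toReal)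
    ↔
    (∀ x ∈ Ω, ∃ r > (0 : ℝ), Metric.ball x r ⊆ Ω ∧
        LipschitzOnWith C.toNNReal F (Metric.ball x r)) :=
  stmt_0_general Ω hΩopen F C hC
end

section
/- Let E be a real normed vector space, let Ω ⊆ E be open and path-connected, let F : Ω → E be differentiable on Ω (Fréchet differentiable at every point of Ω), and let C ≥ 0. Then the derivative bound ‖fderiv F x‖ ≤ C for all x ∈ Ω holds if and only if for all x, y ∈ Ω and every continuous path γ : [0,1] → Ω with γ(0) = x, γ(1) = y and finite length, ‖F(y) − F(x)‖ ≤ C · (length of γ). (That is, the nonlinear scheme F is stable, in the sense of the Lipschitz bound with respect to the intrinsic metric of Ω, if and only if its scheme in variations δF = F′·δx is stable, i.e., the operator norms ‖F′(x)‖ are uniformly bounded by C on Ω.) -/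
/-!
Forward direction: the image of `γ` is compact, so some `r`-thickening of it lies in `Ω`. On each
ball of radius `r` around a point of the path the mean value inequality makes `F` `C`-Lipschitz,
and uniform continuity of `γ` cuts `[0, 1]` into pieces whose endpoints are mapped into one such
ball. Summing over the pieces bounds `‖F y - F x‖` by `C` times a partition sum of `γ`, hence by
`C` times its variation.

Converse: applied to the straight segments from `x` to nearby points, whose length is the distance
of their endpoints, the hypothesis makes `F` `C`-Lipschitz at `x`, which bounds `‖F′(x)‖` by `C`.
-/

open Set Metric AffineMap

section Partition

variable {α β : Type*} [PseudoMetricSpace α] [PseudoMetricSpace β]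

lemma exists_monotone_partition_Icc {a b δ : ℝ} (hab : a ≤ b) (hδ : 0 < δ) :
    ∃ (N : ℕ) (u : ℕ → ℝ), Monotone u ∧ (∀ i, u i ∈ Icc a b) ∧ u 0 = a ∧ u N = b ∧
      ∀ i, dist (u i) (u (i + 1)) < δ := by
  set u : ℕ → ℝ := fun i => min (a + i * (δ / 2)) b
  have hu : Monotone u := fun i j hij => by dsimp only [u]; gcongr
  refine ⟨⌈(b - a) / (δ / 2)⌉₊, u, hu, fun i => ⟨?_, min_le_right _ _⟩, by simpa [u] using hab,
    ?_, fun i => ?_⟩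
  · exact le_min (le_add_of_nonneg_right (by positivity)) hab
  · refine min_eq_right ?_
    have := Nat.le_ceil ((b - a) / (δ / 2))
    rw [div_le_iff₀ (by positivity)] at this
    linarith
  · rw [dist_comm, Real.dist_eq, abs_of_nonneg (sub_nonneg.mpr (hu i.le_succ))]
    calc u (i + 1) - u i ≤ δ / 2 := by
          simp only [u, Nat.cast_succ]
          rcases le_total (a + i * (δ / 2)) b with h | h
          · rw [min_eq_left h]; linarith [min_le_left (a + (i + 1) * (δ / 2)) b]
          · rw [min_eq_right h]; linarith [min_le_right (a + (i + 1) * (δ / 2)) b]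
      _ < δ := half_lt_self hδ

lemma dist_le_mul_eVariationOn_of_partition {f : ℝ → α} {g : ℝ → β} {s : Set ℝ} {C : ℝ}
    (hC : 0 ≤ C) (hf : eVariationOn f s ≠ ⊤) {u : ℕ → ℝ} (hu : Monotone u) (hus : ∀ i, u i ∈ s)
    (N : ℕ) (hstep : ∀ i, dist (g (u i)) (g (u (i + 1))) ≤ C * dist (f (u i)) (f (u (i + 1)))) :
    dist (g (u 0)) (g (u N)) ≤ C * (eVariationOn f s).toReal := by
  have hsum : ∑ i ∈ Finset.range N, dist (f (u i)) (f (u (i + 1))) ≤ (eVariationOn f s).toReal :=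
    calc ∑ i ∈ Finset.range N, dist (f (u i)) (f (u (i + 1)))
        = (∑ i ∈ Finset.range N, edist (f (u (i + 1))) (f (u i))).toReal := by
          rw [ENNReal.toReal_sum fun i _ => edist_ne_top _ _]
          simp only [edist_dist, ENNReal.toReal_ofReal dist_nonneg, dist_comm]
      _ ≤ (eVariationOn f s).toReal := ENNReal.toReal_mono hf (eVariationOn.sum_le hu hus)
  calc dist (g (u 0)) (g (u N))
      ≤ ∑ i ∈ Finset.range N, dist (g (u i)) (g (u (i + 1))) := dist_le_range_sum_dist (g ∘ u) N
    _ ≤ ∑ i ∈ Finset.range N, C * dist (f (u i)) (f (u (i + 1))) :=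
        Finset.sum_le_sum fun i _ => hstep i
    _ ≤ C * (eVariationOn f s).toReal := by
        rw [← Finset.mul_sum]; exact mul_le_mul_of_nonneg_left hsum hC

theorem dist_le_mul_eVariationOn_of_forall_dist_lt {f : ℝ → α} {g : ℝ → β} {a b C δ : ℝ}
    (hab : a ≤ b) (hC : 0 ≤ C) (hδ : 0 < δ) (hf : eVariationOn f (Icc a b) ≠ ⊤)
    (hloc : ∀ s ∈ Icc a b, ∀ t ∈ Icc a b, dist s t < δ → dist (g s) (g t) ≤ C * dist (f s) (f t)) :
    dist (g a) (g b) ≤ C * (eVariationOn f (Icc a b)).toReal := by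
  obtain ⟨N, u, hu, huI, hu0, huN, hustep⟩ := exists_monotone_partition_Icc hab hδ
  have := dist_le_mul_eVariationOn_of_partition hC hf hu huI N
    fun i => hloc _ (huI i) _ (huI (i + 1)) (hustep i)
  rwa [hu0, huN] at this

end Partition

section MeanValue

variable {E G : Type*} [NormedAddCommGroup E] [NormedSpace ℝ E]
  [NormedAddCommGroup G] [NormedSpace ℝ G] {U : Set E} {F : E → G} {C : ℝ}

theorem exists_forall_dist_lt_dist_comp_le (hU : IsOpen U)
    (hF : ∀ x ∈ U, DifferentiableAt ℝ F x) (hbound : ∀ x ∈ U, ‖fderiv ℝ F x‖ ≤ C)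
    {γ : ℝ → E} {a b : ℝ} (hγ : ContinuousOn γ (Icc a b)) (hγU : MapsTo γ (Icc a b) U) :
    ∃ δ > 0, ∀ s ∈ Icc a b, ∀ t ∈ Icc a b, dist s t < δ →
      dist (F (γ s)) (F (γ t)) ≤ C * dist (γ s) (γ t) := by
  obtain ⟨r, hr, hrU⟩ :=
    (isCompact_Icc.image_of_continuousOn hγ).exists_thickening_subset_open hU hγU.image_subset
  obtain ⟨δ, hδ, hδr⟩ :=
    Metric.uniformContinuousOn_iff.mp (isCompact_Icc.uniformContinuousOn_of_continuous hγ) r hr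
  refine ⟨δ, hδ, fun s hs t ht hst => ?_⟩
  have hball : ball (γ t) r ⊆ U :=
    (ball_subset_thickening (mem_image_of_mem γ ht) r).trans hrU
  rw [dist_eq_norm, dist_eq_norm]
  exact (convex_ball _ _).norm_image_sub_le_of_norm_fderiv_le (fun z hz => hF z (hball hz))
    (fun z hz => hbound z (hball hz)) (mem_ball_self hr) (hδr s hs t ht hst)

theorem norm_sub_le_mul_eVariationOn_of_norm_fderiv_le (hU : IsOpen U)
    (hF : ∀ x ∈ U, DifferentiableAt ℝ F x) (hbound : ∀ x ∈ U, ‖fderiv ℝ F x‖ ≤ C) (hC : 0 ≤ C)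
    {γ : ℝ → E} {a b : ℝ} (hab : a ≤ b) (hγ : ContinuousOn γ (Icc a b))
    (hγU : MapsTo γ (Icc a b) U) (hvar : eVariationOn γ (Icc a b) ≠ ⊤) :
    ‖F (γ b) - F (γ a)‖ ≤ C * (eVariationOn γ (Icc a b)).toReal := by
  obtain ⟨δ, hδ, hloc⟩ := exists_forall_dist_lt_dist_comp_le hU hF hbound hγ hγU
  rw [← dist_eq_norm, dist_comm]
  exact dist_le_mul_eVariationOn_of_forall_dist_lt hab hC hδ hvar hloc

end MeanValue

lemma eVariationOn_lineMap_Icc_le {E : Type*} [NormedAddCommGroup E] [NormedSpace ℝ E] (x y : E) :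
    eVariationOn (lineMap x y : ℝ → E) (Icc 0 1) ≤ edist x y := by
  simpa using (lipschitzWith_lineMap x y).lipschitzOnWith.comp_eVariationOn_le
    (g := id) (s := Icc (0 : ℝ) 1) (mapsTo_univ _ _)

theorem stmt_2_general
    {E : Type*} [NormedAddCommGroup E] [NormedSpace ℝ E]
    (Ω : Set E) (hΩopen : IsOpen Ω)
    (F : E → E) (hF : ∀ x ∈ Ω, DifferentiableAt ℝ F x)
    (C : ℝ) (hC : 0 ≤ C) :
    (∀ x ∈ Ω, ‖fderiv ℝ F x‖ ≤ C)
    ↔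
    (∀ x ∈ Ω, ∀ y ∈ Ω, ∀ γ : ℝ → E,
        ContinuousOn γ (Set.Icc 0 1) →
        (∀ t ∈ Set.Icc (0 : ℝ) 1, γ t ∈ Ω) →
        γ 0 = x → γ 1 = y →
        eVariationOn γ (Set.Icc 0 1) < ⊤ →
        ‖F y - F x‖ ≤ C * (eVariationOn γ (Set.Icc 0 1)).toReal) := by
  refine ⟨fun hbound x _ y _ γ hγ hγΩ hγ0 hγ1 hvar => ?_, fun hpath x₀ hx₀ => ?_⟩
  · rw [← hγ0, ← hγ1]
    exact norm_sub_le_mul_eVariationOn_of_norm_fderiv_le hΩopen hF hbound hC zero_le_one hγ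
      hγΩ hvar.ne
  · obtain ⟨ε, hε, hball⟩ := Metric.isOpen_iff.mp hΩopen x₀ hx₀
    refine norm_fderiv_le_of_lip' ℝ hC ?_
    filter_upwards [ball_mem_nhds x₀ hε] with x hx
    have hvar := eVariationOn_lineMap_Icc_le x₀ x
    calc ‖F x - F x₀‖ ≤ C * (eVariationOn (lineMap x₀ x) (Icc (0 : ℝ) 1)).toReal :=
          hpath x₀ hx₀ x (hball hx) _ lineMap_continuous.continuousOn
            (fun t ht => hball ((convex_ball x₀ ε).lineMap_mem (mem_ball_self hε) hx ht))
            (lineMap_apply_zero _ _) (lineMap_apply_one _ _)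
            (hvar.trans_lt (edist_lt_top _ _))
      _ ≤ C * ‖x - x₀‖ := by
          gcongr
          rw [← dist_eq_norm, dist_comm, dist_edist]
          exact ENNReal.toReal_mono (edist_ne_top _ _) hvar

/-- A nonlinear scheme `F`, differentiable on the open path-connected set `Ω`, is stable
(in the sense of the Lipschitz bound with respect to the intrinsic metric of `Ω`, i.e.
against lengths of finite-length continuous paths in `Ω`) if and only if its scheme in
variations is stable, i.e. `‖F′(x)‖ ≤ C` uniformly on `Ω`. -/
theorem stmt_2
    {E : Type*} [NormedAddCommGroup E] [NormedSpace ℝ E]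
    (Ω : Set E) (hΩopen : IsOpen Ω) (hΩconn : IsPathConnected Ω)
    (F : E → E) (hF : ∀ x ∈ Ω, DifferentiableAt ℝ F x)
    (C : ℝ) (hC : 0 ≤ C) :
    (∀ x ∈ Ω, ‖fderiv ℝ F x‖ ≤ C)
    ↔
    (∀ x ∈ Ω, ∀ y ∈ Ω, ∀ γ : ℝ → E,
        ContinuousOn γ (Set.Icc 0 1) →
        (∀ t ∈ Set.Icc (0 : ℝ) 1, γ t ∈ Ω) →
        γ 0 = x → γ 1 = y →
        eVariationOn γ (Set.Icc 0 1) < ⊤ →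
        ‖F y - F x‖ ≤ C * (eVariationOn γ (Set.Icc 0 1)).toReal) :=
  stmt_2_general Ω hΩopen F hF C hC
end

section
/- For all real numbers α, β with 0 ≤ α ≤ 3 and 0 ≤ β ≤ 3, at least one of the following two Fritsch–Carlson monotonicity conditions holds: (α − 1)² + (α − 1)(β − 1) + (β − 1)² − 3(α + β − 2) ≤ 0, or α + β ≤ 3. (Hence the square 0 ≤ α, β ≤ 4ℵ with monotonicity parameter 0 ≤ ℵ ≤ 3/4 is contained in the Fritsch–Carlson region of monotonicity, so the condition 0 ≤ α, β ≤ 4ℵ, ℵ ≤ 3/4 is sufficient for monotonicity of the cubic Hermite segment.) -/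
/-! Writing the Fritsch–Carlson quadratic as `(α + β - 3)(α + β - 6) - (3 - α)(3 - β)`, both terms
are nonpositive on the part of the square `α, β ≤ 3` above the line `α + β = 3`. -/

theorem fritschCarlson_quadratic_eq (α β : ℝ) :
    (α - 1)^2 + (α - 1)*(β - 1) + (β - 1)^2 - 3*(α + β - 2)
      = (α + β - 3) * (α + β - 6) - (3 - α) * (3 - β) := by
  ring

theorem stmt_4_general (α β : ℝ) (hα3 : α ≤ 3) (hβ3 : β ≤ 3) :
    (α - 1)^2 + (α - 1)*(β - 1) + (β - 1)^2 - 3*(α + β - 2) ≤ 0 ∨ α + β ≤ 3 := by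
  rcases le_or_gt (α + β) 3 with hsum | hsum
  · exact Or.inr hsum
  · left
    rw [fritschCarlson_quadratic_eq]
    have hline : (α + β - 3) * (α + β - 6) ≤ 0 :=
      mul_nonpos_of_nonneg_of_nonpos (by linarith) (by linarith)
    have hcorner : 0 ≤ (3 - α) * (3 - β) := mul_nonneg (by linarith) (by linarith)
    linarith

/-- The square `0 ≤ α, β ≤ 3` (i.e. `0 ≤ α, β ≤ 4ℵ` with `ℵ ≤ 3/4`) is contained in the
Fritsch–Carlson region of monotonicity: at least one of the two monotonicity conditions
holds for every point of the square. -/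
theorem stmt_4 (α β : ℝ) (hα0 : 0 ≤ α) (hα3 : α ≤ 3) (hβ0 : 0 ≤ β) (hβ3 : β ≤ 3) :
    (α - 1)^2 + (α - 1)*(β - 1) + (β - 1)^2 - 3*(α + β - 2) ≤ 0 ∨ α + β ≤ 3 :=
  stmt_4_general α β hα3 hβ3
end

section
/- Let f : ℝ → ℝ be four times continuously differentiable (ContDiff ℝ 4) and let m ∈ ℝ. Then the midpoint interpolation error h ↦ f(m) − [ (1/2)(f(m − h/2) + f(m + h/2)) − (h/8)·(f′(m + h/2) − f′(m − h/2)) ] is O(h⁴) as h → 0, where f′ denotes the derivative of f. -/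
/-!
Write `E(h)` for the error. Then `E(0) = 0`, and
`E'(h) = h/16 · (f''(m + h/2) + f''(m - h/2)) - (f'(m + h/2) - f'(m - h/2))/8` also vanishes at `0`.
Differentiating once more, the `f''` terms cancel and
`E''(h) = h/32 · (f'''(m + h/2) - f'''(m - h/2)) = O(h²)`, because `f'''` is differentiable at `m`.
Two applications of the mean value inequality lift this to `E'(h) = O(h³)` and `E(h) = O(h⁴)`.
-/

open Asymptotics Topology

theorem isBigO_pow_succ_of_hasDerivAt {E : Type*} [NormedAddCommGroup E] [NormedSpace ℝ E]
    {g g' : ℝ → E} {n : ℕ} (hderiv : ∀ᶠ x in 𝓝 0, HasDerivAt g (g' x) x) (hzero : g 0 = 0)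
    (hg' : g' =O[𝓝 0] (· ^ n)) : g =O[𝓝 0] (· ^ (n + 1)) := by
  obtain ⟨C, hC0, hC⟩ := hg'.exists_nonneg
  obtain ⟨ε, hε, hball⟩ := Metric.eventually_nhds_iff_ball.mp (hderiv.and hC.bound)
  refine IsBigO.of_bound C (Metric.eventually_nhds_iff_ball.mpr ⟨ε, hε, fun h hh => ?_⟩)
  have hsub : Metric.closedBall (0 : ℝ) ‖h‖ ⊆ Metric.ball 0 ε :=
    Metric.closedBall_subset_ball (by simpa using hh)
  have hbound : ∀ t ∈ Metric.closedBall (0 : ℝ) ‖h‖, ‖g' t‖ ≤ C * ‖h‖ ^ n := fun t ht =>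
    calc ‖g' t‖ ≤ C * ‖t‖ ^ n := by simpa [norm_pow] using (hball t (hsub ht)).2
      _ ≤ C * ‖h‖ ^ n := by gcongr; simpa using ht
  have hmvt := (convex_closedBall (0 : ℝ) ‖h‖).norm_image_sub_le_of_norm_hasDerivWithin_le
    (fun t ht => (hball t (hsub ht)).1.hasDerivWithinAt) hbound
    (Metric.mem_closedBall_self (norm_nonneg h)) (x := 0) (y := h) (by simp)
  simpa [hzero, norm_pow, pow_succ, mul_assoc] using hmvt

section CentralDifference

variable {E : Type*} [NormedAddCommGroup E] [NormedSpace ℝ E]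

noncomputable def centralDiff (φ : ℝ → E) (m h : ℝ) : E := φ (m + h / 2) - φ (m - h / 2)

noncomputable def centralSum (φ : ℝ → E) (m h : ℝ) : E := φ (m + h / 2) + φ (m - h / 2)

variable {φ φ' : ℝ → E}

theorem hasDerivAt_comp_add_half (hφ : ∀ y, HasDerivAt φ (φ' y) y) (m x : ℝ) :
    HasDerivAt (fun h => φ (m + h / 2)) ((1 / 2 : ℝ) • φ' (m + x / 2)) x :=
  (hφ _).scomp x (((hasDerivAt_id x).div_const 2).const_add m)

theorem hasDerivAt_comp_sub_half (hφ : ∀ y, HasDerivAt φ (φ' y) y) (m x : ℝ) :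
    HasDerivAt (fun h => φ (m - h / 2)) (-(1 / 2 : ℝ) • φ' (m - x / 2)) x :=
  (hφ _).scomp x (((hasDerivAt_id x).div_const 2).const_sub m)

theorem hasDerivAt_centralDiff (hφ : ∀ y, HasDerivAt φ (φ' y) y) (m x : ℝ) :
    HasDerivAt (centralDiff φ m) ((1 / 2 : ℝ) • centralSum φ' m x) x := by
  refine ((hasDerivAt_comp_add_half hφ m x).sub (hasDerivAt_comp_sub_half hφ m x)).congr_deriv ?_
  simp only [centralSum, smul_add, neg_smul, sub_neg_eq_add]

theorem hasDerivAt_centralSum (hφ : ∀ y, HasDerivAt φ (φ' y) y) (m x : ℝ) :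
    HasDerivAt (centralSum φ m) ((1 / 2 : ℝ) • centralDiff φ' m x) x := by
  refine ((hasDerivAt_comp_add_half hφ m x).add (hasDerivAt_comp_sub_half hφ m x)).congr_deriv ?_
  rw [centralDiff, smul_sub, neg_smul, ← sub_eq_add_neg]

theorem centralDiff_isBigO_id {m : ℝ} (hφ : DifferentiableAt ℝ φ m) :
    centralDiff φ m =O[𝓝 0] id := by
  have hφ₀ : DifferentiableAt ℝ φ (m + 0 / 2) ∧ DifferentiableAt ℝ φ (m - 0 / 2) := by
    simpa using hφ
  have hd : DifferentiableAt ℝ (centralDiff φ m) 0 :=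
    (hφ₀.1.comp 0 (by fun_prop)).sub (hφ₀.2.comp 0 (by fun_prop))
  have hO := hd.isBigO_sub
  simp only [centralDiff, add_zero, sub_zero, zero_div, sub_self] at hO
  exact hO

end CentralDifference

section MidpointInterpolation

noncomputable def midpointError (f f' : ℝ → ℝ) (m h : ℝ) : ℝ :=
  f m - (centralSum f m h / 2 - h / 8 * centralDiff f' m h)

variable {f f' f'' f''' : ℝ → ℝ}

theorem hasDerivAt_midpointError (hf : ∀ y, HasDerivAt f (f' y) y)
    (hf' : ∀ y, HasDerivAt f' (f'' y) y) (m x : ℝ) :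
    HasDerivAt (midpointError f f' m) (x / 16 * centralSum f'' m x - centralDiff f' m x / 8) x := by
  have hd := ((hasDerivAt_centralSum hf m x).div_const 2).sub
    (((hasDerivAt_id x).div_const 8).mul (hasDerivAt_centralDiff hf' m x))
  refine (hd.const_sub (f m)).congr_deriv ?_
  simp only [smul_eq_mul, id]
  ring

theorem hasDerivAt_midpointError_deriv (hf' : ∀ y, HasDerivAt f' (f'' y) y)
    (hf'' : ∀ y, HasDerivAt f'' (f''' y) y) (m x : ℝ) :
    HasDerivAt (fun h => h / 16 * centralSum f'' m h - centralDiff f' m h / 8)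
      (x / 32 * centralDiff f''' m x) x := by
  have hd := (((hasDerivAt_id x).div_const 16).mul (hasDerivAt_centralSum hf'' m x)).sub
    ((hasDerivAt_centralDiff hf' m x).div_const 8)
  refine hd.congr_deriv ?_
  simp only [smul_eq_mul, id]
  ring

theorem midpointError_isBigO_pow_four {m : ℝ} (hf : ∀ y, HasDerivAt f (f' y) y)
    (hf' : ∀ y, HasDerivAt f' (f'' y) y) (hf'' : ∀ y, HasDerivAt f'' (f''' y) y)
    (hf''' : DifferentiableAt ℝ f''' m) :
    midpointError f f' m =O[𝓝 0] (· ^ 4) := by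
  have hE'' : (fun h => h / 32 * centralDiff f''' m h) =O[𝓝 0] (· ^ 2) := by
    have hO := ((isBigO_refl id (𝓝 (0 : ℝ))).mul (centralDiff_isBigO_id hf''')).const_mul_left
      (1 / 32)
    refine (hO.congr_left fun h => ?_).congr_right fun h => ?_ <;> simp only [id] <;> ring
  have hE' := isBigO_pow_succ_of_hasDerivAt
    (.of_forall (hasDerivAt_midpointError_deriv hf' hf'' m)) (by simp [centralSum, centralDiff]) hE''
  exact isBigO_pow_succ_of_hasDerivAt (.of_forall (hasDerivAt_midpointError hf hf' m))
    (by simp [midpointError, centralSum, centralDiff]) hE'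

end MidpointInterpolation

/-- For a `C⁴` function `f`, the midpoint interpolation error
`f(m) − [ (f(m−h/2)+f(m+h/2))/2 − (h/8)(f′(m+h/2) − f′(m−h/2)) ]` is `O(h⁴)` as `h → 0`. -/
theorem stmt_5 (f : ℝ → ℝ) (hf : ContDiff ℝ 4 f) (m : ℝ) :
    (fun h : ℝ =>
        f m - ((1/2) * (f (m - h/2) + f (m + h/2))
          - (h/8) * (deriv f (m + h/2) - deriv f (m - h/2))))
      =O[nhds 0] (fun h : ℝ => h^4) := by
  have hf₁ : ContDiff ℝ 3 (deriv f) := hf.deriv'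
  have hf₂ : ContDiff ℝ 2 (deriv (deriv f)) := hf₁.deriv'
  have hf₃ : ContDiff ℝ 1 (deriv (deriv (deriv f))) := hf₂.deriv'
  have hasDerivAt_deriv {n : WithTop ℕ∞} {g : ℝ → ℝ} (hg : ContDiff ℝ n g) (hn : n ≠ 0) (y : ℝ) :
      HasDerivAt g (deriv g y) y :=
    (hg.differentiable hn y).hasDerivAt
  refine (midpointError_isBigO_pow_four (hasDerivAt_deriv hf (by simp))
    (hasDerivAt_deriv hf₁ (by simp)) (hasDerivAt_deriv hf₂ (by simp))
    (hf₃.differentiable one_ne_zero m)).congr_left fun h => ?_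
  simp only [midpointError, centralSum, centralDiff]
  ring
end

section
/- Let f : ℝ → ℝ be four times continuously differentiable (ContDiff ℝ 4), m ∈ ℝ, s ≥ 0 a real number, and let d₊, d₋ : ℝ → ℝ be approximate derivative values satisfying d₊(h) − f′(m + h/2) = O(h^s) and d₋(h) − f′(m − h/2) = O(h^s) as h → 0. Then the interpolation error h ↦ f(m) − [ (1/2)(f(m − h/2) + f(m + h/2)) − (h/8)·(d₊(h) − d₋(h)) ] is O(h^r) as h → 0 with r = min(4, s + 1). -/
/-!
With exact endpoint derivatives the error `E(h) = f m - ((f (m - h/2) + f (m + h/2)) / 2 -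
h/8 · (f' (m + h/2) - f' (m - h/2)))` vanishes at `h = 0` together with `E'`, and
`E''(h) = h/32 · (f''' (m + h/2) - f''' (m - h/2)) = O(h²)`; integrating twice gives `E = O(h⁴)`.
Replacing the exact derivatives by the approximate ones adds `h/8` times an `O(|h|^s)` term.
-/

open Asymptotics Filter Metric Topology

theorem isBigO_pow_succ_of_hasDerivAt_s6 {𝕜 G : Type*} [RCLike 𝕜] [NormedAddCommGroup G]
    [NormedSpace 𝕜 G] {u u' : 𝕜 → G} {n : ℕ} (hu : u 0 = 0)
    (hd : ∀ᶠ x in 𝓝 0, HasDerivAt u (u' x) x) (hO : u' =O[𝓝 0] (· ^ n)) :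
    u =O[𝓝 0] (· ^ (n + 1)) := by
  obtain ⟨C, hC0, hC⟩ := hO.exists_nonneg
  obtain ⟨δ, hδ, hball⟩ := eventually_nhds_iff_ball.1 (hd.and hC.bound)
  refine .of_bound C ?_
  filter_upwards [ball_mem_nhds 0 hδ] with h hh
  have hsub : closedBall (0 : 𝕜) ‖h‖ ⊆ ball 0 δ := closedBall_subset_ball (by simpa using hh)
  have bound : ∀ x ∈ closedBall (0 : 𝕜) ‖h‖, ‖u' x‖ ≤ C * ‖h‖ ^ n := fun x hx => by
    calc ‖u' x‖ ≤ C * ‖x ^ n‖ := (hball x (hsub hx)).2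
      _ ≤ C * ‖h‖ ^ n := by
        rw [norm_pow]
        exact mul_le_mul_of_nonneg_left (pow_le_pow_left₀ (norm_nonneg _) (by simpa using hx) n) hC0
  have := (convex_closedBall (0 : 𝕜) ‖h‖).norm_image_sub_le_of_norm_hasDerivWithin_le
    (fun x hx => (hball x (hsub hx)).1.hasDerivWithinAt) bound
    (mem_closedBall_self (norm_nonneg h)) (y := h) (by simp)
  simpa [hu, norm_pow, pow_succ, mul_assoc] using this

theorem isBigO_abs_rpow_abs_rpow_of_le_of_imp {a b : ℝ} (hab : b ≤ a) (himp : a = 0 → b = 0) :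
    (|·| ^ a : ℝ → ℝ) =O[𝓝 0] (|·| ^ b) :=
  (IsBigO.rpow_rpow_nhdsGE_zero_of_le_of_imp hab himp).comp_tendsto <|
    tendsto_nhdsWithin_of_tendsto_nhds_of_eventually_within _
      (by simpa using continuous_abs.tendsto (0 : ℝ)) (.of_forall abs_nonneg)

theorem isBigO_pow_abs_rpow_of_le {a : ℝ} {n : ℕ} (ha : a ≤ n) (hn : n ≠ 0) :
    (· ^ n : ℝ → ℝ) =O[𝓝 0] (|·| ^ a) :=
  (IsBigO.of_norm_eventuallyLE (.of_forall fun x => by simp [Real.rpow_natCast])).trans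
    (isBigO_abs_rpow_abs_rpow_of_le_of_imp ha fun h => (hn (by exact_mod_cast h)).elim)

theorem isBigO_mul_abs_rpow (s : ℝ) :
    (fun h : ℝ => h * |h| ^ s) =O[𝓝 0] (|·| ^ (s + 1)) := by
  refine .of_norm_eventuallyLE (.of_forall fun h => ?_)
  rcases eq_or_ne h 0 with rfl | hh
  · simp [Real.rpow_nonneg]
  · simp [Real.rpow_add_one (abs_ne_zero.2 hh), mul_comm,
      abs_of_nonneg (Real.rpow_nonneg (abs_nonneg h) s)]

section HalfShift

variable {u : ℝ → ℝ} {m : ℝ}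

theorem hasDerivAt_half_shift_sub (hu : Differentiable ℝ u) (h : ℝ) :
    HasDerivAt (fun h => u (m + h / 2) - u (m - h / 2))
      ((deriv u (m + h / 2) + deriv u (m - h / 2)) / 2) h := by
  have hp := (hu _).hasDerivAt.comp h (((hasDerivAt_id h).div_const 2).const_add m)
  have hm := (hu _).hasDerivAt.comp h (((hasDerivAt_id h).div_const 2).const_sub m)
  exact (hp.sub hm).congr_deriv (by simp; ring)

theorem hasDerivAt_half_shift_add (hu : Differentiable ℝ u) (h : ℝ) :
    HasDerivAt (fun h => u (m - h / 2) + u (m + h / 2))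
      ((deriv u (m + h / 2) - deriv u (m - h / 2)) / 2) h := by
  have hp := (hu _).hasDerivAt.comp h (((hasDerivAt_id h).div_const 2).const_add m)
  have hm := (hu _).hasDerivAt.comp h (((hasDerivAt_id h).div_const 2).const_sub m)
  exact (hm.add hp).congr_deriv (by simp; ring)

end HalfShift

theorem midpoint_hermite_error_isBigO {f : ℝ → ℝ} (hf : ContDiff ℝ 4 f) (m : ℝ) :
    (fun h : ℝ => f m - ((1 / 2) * (f (m - h / 2) + f (m + h / 2)) -
        (h / 8) * (deriv f (m + h / 2) - deriv f (m - h / 2)))) =O[𝓝 0] (· ^ 4) := by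
  have hd : ∀ k ≤ 3, Differentiable ℝ (deriv^[k] f) := fun k hk =>
    ((hf.of_le (by exact_mod_cast (show 1 + k ≤ 4 by omega))).iterate_deriv' 1 k).differentiable
      one_ne_zero
  set f₁ := deriv f
  set f₂ := deriv f₁
  set f₃ := deriv f₂
  have hd₀ : Differentiable ℝ f := hd 0 (by norm_num)
  have hd₁ : Differentiable ℝ f₁ := hd 1 (by norm_num)
  have hd₂ : Differentiable ℝ f₂ := hd 2 (by norm_num)
  have hd₃ : Differentiable ℝ f₃ := hd 3 le_rfl
  have hD₃ : (fun h => f₃ (m + h / 2) - f₃ (m - h / 2)) =O[𝓝 0] (· ^ 1) := by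
    simpa using (hasDerivAt_half_shift_sub (m := m) hd₃ 0).isBigO_sub
  have hE₂ : (fun h : ℝ => h / 32 * (f₃ (m + h / 2) - f₃ (m - h / 2))) =O[𝓝 0] (· ^ (1 + 1)) :=
    ((isBigO_refl (· ^ 1) _).mul hD₃).const_mul_left (1 / 32) |>.congr (fun h => by ring)
      (fun h => by ring)
  have hE₁ : (fun h : ℝ => -(1 / 8) * (f₁ (m + h / 2) - f₁ (m - h / 2)) +
      h / 16 * (f₂ (m - h / 2) + f₂ (m + h / 2))) =O[𝓝 0] (· ^ (1 + 1 + 1)) := by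
    refine isBigO_pow_succ_of_hasDerivAt_s6 (by simp) (.of_forall fun h => ?_) hE₂
    exact (((hasDerivAt_half_shift_sub hd₁ h).const_mul _).fun_add
      (((hasDerivAt_id h).div_const 16).fun_mul (hasDerivAt_half_shift_add hd₂ h))).congr_deriv
      (by simp; ring)
  refine isBigO_pow_succ_of_hasDerivAt_s6 (by simp; ring) (.of_forall fun h => ?_) hE₁
  exact (((hasDerivAt_half_shift_add hd₀ h).const_mul (1 / 2)).fun_sub
    (((hasDerivAt_id h).div_const 8).fun_mul (hasDerivAt_half_shift_sub hd₁ h))).const_sub (f m)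
    |>.congr_deriv (by simp; ring)

theorem stmt_6_general (f : ℝ → ℝ) (hf : ContDiff ℝ 4 f) (m : ℝ) (s : ℝ)
    (dp dm : ℝ → ℝ)
    (hdp : (fun h : ℝ => dp h - deriv f (m + h/2)) =O[nhds 0] (fun h : ℝ => |h| ^ s))
    (hdm : (fun h : ℝ => dm h - deriv f (m - h/2)) =O[nhds 0] (fun h : ℝ => |h| ^ s)) :
    (fun h : ℝ =>
        f m - ((1/2) * (f (m - h/2) + f (m + h/2)) - (h/8) * (dp h - dm h)))
      =O[nhds 0] (fun h : ℝ => |h| ^ min 4 (s + 1)) := by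
  have hexact := (midpoint_hermite_error_isBigO hf m).trans
    (isBigO_pow_abs_rpow_of_le (min_le_left 4 (s + 1)) (by norm_num))
  have hperturb := (((isBigO_refl id _).mul (hdp.sub hdm)).const_mul_left (1 / 8)).trans <|
    (isBigO_mul_abs_rpow s).trans <|
      isBigO_abs_rpow_abs_rpow_of_le_of_imp (min_le_right 4 (s + 1)) fun h => by simp [h]
  exact (hexact.add hperturb).congr_left fun h => by simp only [id]; ring

/-- Midpoint interpolation with approximate endpoint derivatives: if the derivative values
are `O(h^s)`-accurate, the interpolation error is `O(h^r)` with `r = min(4, s+1)`. -/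
theorem stmt_6 (f : ℝ → ℝ) (hf : ContDiff ℝ 4 f) (m : ℝ) (s : ℝ) (hs : 0 ≤ s)
    (dp dm : ℝ → ℝ)
    (hdp : (fun h : ℝ => dp h - deriv f (m + h/2)) =O[nhds 0] (fun h : ℝ => |h| ^ s))
    (hdm : (fun h : ℝ => dm h - deriv f (m - h/2)) =O[nhds 0] (fun h : ℝ => |h| ^ s)) :
    (fun h : ℝ =>
        f m - ((1/2) * (f (m - h/2) + f (m + h/2)) - (h/8) * (dp h - dm h)))
      =O[nhds 0] (fun h : ℝ => |h| ^ min 4 (s + 1)) :=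
  stmt_6_general f hf m s dp dm hdp hdm
end
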